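/- Let G be a connected simple graph of order n with diam(G) = 2 and β(G) = n − 3, with twin graph G*, and let v be a vertex of G such that Γ_2^*(v^*) ≠ ∅ and Γ_1(v) is homogeneous. If Γ_2(v) is not homogeneous, then R_2(v) = ∅ and R_2^*(v^*) = ∅. -/

import Mathlib

namespace PaperMetricDim

open SimpleGraph

variable {V : Type*}

/-- A set `W` of vertices resolves the graph `G`: any two distinct vertices have
different distance to some vertex of `W`. -/
def Resolves (G : SimpleGraph V) (W : Set V) : Prop :=
  ∀ u v : V, u ≠ v → ∃ w ∈ W, G.dist u w ≠ G.dist v w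

/-- The metric dimension of `G`: the minimum cardinality of a resolving set. -/
noncomputable def metricDim (G : SimpleGraph V) : ℕ :=
  sInf {k : ℕ | ∃ W : Set V, Resolves G W ∧ W.ncard = k}

/-- `G` is connected and has diameter exactly `d`. -/
def diamEq (G : SimpleGraph V) (d : ℕ) : Prop :=
  G.Connected ∧ (∀ u v : V, G.dist u v ≤ d) ∧ ∃ u v : V, G.dist u v = d

/-- A set of vertices is homogeneous if it induces a complete or an empty subgraph. -/
def Homogeneous (G : SimpleGraph V) (S : Set V) : Prop :=
  (∀ a ∈ S, ∀ b ∈ S, a ≠ b → G.Adj a b) ∨ (∀ a ∈ S, ∀ b ∈ S, ¬ G.Adj a b)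

/-- Two distinct vertices are twins: they have the same neighbours apart from
each other. -/
def Twins (G : SimpleGraph V) (u v : V) : Prop :=
  u ≠ v ∧ G.neighborSet u \ {v} = G.neighborSet v \ {u}

/-- The twin equivalence relation: equal or twins. -/
def twinRel (G : SimpleGraph V) (u v : V) : Prop := u = v ∨ Twins G u v

/-- The twin class of a vertex. -/
def twinClass (G : SimpleGraph V) (v : V) : Set V := {u : V | twinRel G v u}

/-- The vertices of the twin graph: twin equivalence classes. -/
def TwinVertex (G : SimpleGraph V) : Type _ := {S : Set V // ∃ v : V, S = twinClass G v}

/-- The twin graph `G*` of `G`: twin classes, two distinct classes being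
adjacent iff (some, equivalently all) representatives are adjacent in `G`. -/
def twinGraph (G : SimpleGraph V) : SimpleGraph (TwinVertex G) where
  Adj A B := A ≠ B ∧ ∃ a ∈ A.1, ∃ b ∈ B.1, G.Adj a b
  symm := by
    constructor
    rintro A B ⟨hne, a, ha, b, hb, hab⟩
    exact ⟨hne.symm, b, hb, a, ha, hab.symm⟩
  loopless := by constructor; rintro A ⟨hne, -⟩; exact hne rfl

/-- The twin class of `v`, as a vertex of the twin graph. -/
def cls (G : SimpleGraph V) (v : V) : TwinVertex G := ⟨twinClass G v, v, rfl⟩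

/-- A twin-graph vertex of type (1): a singleton class. -/
def typeOne (G : SimpleGraph V) (A : TwinVertex G) : Prop := ∃ v : V, A.1 = {v}

/-- A twin-graph vertex of type (K): a class with at least two vertices inducing
a complete subgraph. -/
def typeK (G : SimpleGraph V) (A : TwinVertex G) : Prop :=
  A.1.Nontrivial ∧ ∀ a ∈ A.1, ∀ b ∈ A.1, a ≠ b → G.Adj a b

/-- A twin-graph vertex of type (N): a class with at least two vertices inducing
an empty subgraph. -/
def typeN (G : SimpleGraph V) (A : TwinVertex G) : Prop :=
  A.1.Nontrivial ∧ ∀ a ∈ A.1, ∀ b ∈ A.1, ¬ G.Adj a b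

/-- Type (1K): type (1) or type (K). -/
def type1K (G : SimpleGraph V) (A : TwinVertex G) : Prop := typeOne G A ∨ typeK G A

/-- Type (1N): type (1) or type (N). -/
def type1N (G : SimpleGraph V) (A : TwinVertex G) : Prop := typeOne G A ∨ typeN G A

/-- Type (KN): type (K) or type (N). -/
def typeKN (G : SimpleGraph V) (A : TwinVertex G) : Prop := typeK G A ∨ typeN G A

/-- `Γ_i(v)`: the set of vertices at distance `i` from `v`. -/
def Gamma (G : SimpleGraph V) (i : ℕ) (v : V) : Set V := {u : V | G.dist u v = i}

/-- `Γ_i^*(v^*)`: the set of twin-graph vertices at distance `i` from `v^*`. -/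
def GammaStar (G : SimpleGraph V) (i : ℕ) (v : V) : Set (TwinVertex G) :=
  {A : TwinVertex G | (twinGraph G).dist A (cls G v) = i}

/-- `R_1(v)`: neighbours of `v` having a neighbour at distance 2 from `v`. -/
def R1 (G : SimpleGraph V) (v : V) : Set V :=
  {x ∈ Gamma G 1 v | ∃ y ∈ Gamma G 2 v, G.Adj x y}

/-- `R_2(v) = Γ_1(v) \ R_1(v)`. -/
def R2 (G : SimpleGraph V) (v : V) : Set V := Gamma G 1 v \ R1 G v

/-- `R_1^*(v^*)`: twin-graph neighbours of `v^*` having a neighbour in `Γ_2^*(v^*)`. -/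
def R1Star (G : SimpleGraph V) (v : V) : Set (TwinVertex G) :=
  {A ∈ GammaStar G 1 v | ∃ B ∈ GammaStar G 2 v, (twinGraph G).Adj A B}

/-- `R_2^*(v^*) = Γ_1^*(v^*) \ R_1^*(v^*)`. -/
def R2Star (G : SimpleGraph V) (v : V) : Set (TwinVertex G) :=
  GammaStar G 1 v \ R1Star G v

/-- `M_1(x) = Γ_1(v) ∩ Γ_1(x)` (for `x ∈ Γ_1(v)`). -/
def M1 (G : SimpleGraph V) (v x : V) : Set V := Gamma G 1 v ∩ Gamma G 1 x

/-- `M_2(x) = Γ_1(v) ∩ Γ_2(x)` (for `x ∈ Γ_1(v)`). -/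
def M2 (G : SimpleGraph V) (v x : V) : Set V := Gamma G 1 v ∩ Gamma G 2 x

/-- Structure `G_1`: the twin graph is `K_3` and has at most one vertex of type (1K). -/
def structG1 (G : SimpleGraph V) : Prop :=
  ∃ a b c : TwinVertex G, a ≠ b ∧ a ≠ c ∧ b ≠ c ∧
    (∀ X : TwinVertex G, X = a ∨ X = b ∨ X = c) ∧
    (twinGraph G).Adj a b ∧ (twinGraph G).Adj a c ∧ (twinGraph G).Adj b c ∧
    (∀ X Y : TwinVertex G, type1K G X → type1K G Y → X = Y)

/-- Structure `G_2`: the twin graph is the path `P_3` with (a) centre of type (N)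
and some leaf of type (K), or (b) one leaf of type (K) and the other of type (KN). -/
def structG2 (G : SimpleGraph V) : Prop :=
  ∃ a b c : TwinVertex G, a ≠ b ∧ a ≠ c ∧ b ≠ c ∧
    (∀ X : TwinVertex G, X = a ∨ X = b ∨ X = c) ∧
    (twinGraph G).Adj a b ∧ (twinGraph G).Adj b c ∧ ¬ (twinGraph G).Adj a c ∧
    ((typeN G b ∧ (typeK G a ∨ typeK G c)) ∨
     (typeK G a ∧ typeKN G c) ∨ (typeK G c ∧ typeKN G a))

/-- Structure `G_3`: the twin graph is the paw, the triangle being `u, p, q` with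
the pendant vertex `l` attached to `u`; `p` is of type (N), `q` of type (1K),
`l` of type (1N); and if `q` is of type (K) then neither `l` nor `u` is of type (N). -/
def structG3 (G : SimpleGraph V) : Prop :=
  ∃ u p q l : TwinVertex G,
    u ≠ p ∧ u ≠ q ∧ u ≠ l ∧ p ≠ q ∧ p ≠ l ∧ q ≠ l ∧
    (∀ X : TwinVertex G, X = u ∨ X = p ∨ X = q ∨ X = l) ∧
    (twinGraph G).Adj u p ∧ (twinGraph G).Adj u q ∧ (twinGraph G).Adj p q ∧
    (twinGraph G).Adj u l ∧ ¬ (twinGraph G).Adj p l ∧ ¬ (twinGraph G).Adj q l ∧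
    typeN G p ∧ type1K G q ∧ type1N G l ∧
    (typeK G q → ¬ typeN G l ∧ ¬ typeN G u)

/-- Structure `G_4`: the twin graph is the cycle `C_5` and every vertex is of type (1). -/
def structG4 (G : SimpleGraph V) : Prop :=
  ∃ v0 v1 v2 v3 v4 : TwinVertex G,
    v0 ≠ v1 ∧ v0 ≠ v2 ∧ v0 ≠ v3 ∧ v0 ≠ v4 ∧ v1 ≠ v2 ∧ v1 ≠ v3 ∧ v1 ≠ v4 ∧
    v2 ≠ v3 ∧ v2 ≠ v4 ∧ v3 ≠ v4 ∧
    (∀ X : TwinVertex G, X = v0 ∨ X = v1 ∨ X = v2 ∨ X = v3 ∨ X = v4) ∧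
    (twinGraph G).Adj v0 v1 ∧ (twinGraph G).Adj v1 v2 ∧ (twinGraph G).Adj v2 v3 ∧
    (twinGraph G).Adj v3 v4 ∧ (twinGraph G).Adj v4 v0 ∧
    ¬ (twinGraph G).Adj v0 v2 ∧ ¬ (twinGraph G).Adj v1 v3 ∧ ¬ (twinGraph G).Adj v2 v4 ∧
    ¬ (twinGraph G).Adj v3 v0 ∧ ¬ (twinGraph G).Adj v4 v1 ∧
    (∀ X : TwinVertex G, typeOne G X)

/-- Structure `G_5`: the twin graph is `C_5` with one chord (cycle `v0 v1 v2 v3 v4`,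
chord `v0 v2`); the two adjacent degree-2 vertices `v3, v4` are of type (1), the
other vertices of type (1K). -/
def structG5 (G : SimpleGraph V) : Prop :=
  ∃ v0 v1 v2 v3 v4 : TwinVertex G,
    v0 ≠ v1 ∧ v0 ≠ v2 ∧ v0 ≠ v3 ∧ v0 ≠ v4 ∧ v1 ≠ v2 ∧ v1 ≠ v3 ∧ v1 ≠ v4 ∧
    v2 ≠ v3 ∧ v2 ≠ v4 ∧ v3 ≠ v4 ∧
    (∀ X : TwinVertex G, X = v0 ∨ X = v1 ∨ X = v2 ∨ X = v3 ∨ X = v4) ∧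
    (twinGraph G).Adj v0 v1 ∧ (twinGraph G).Adj v1 v2 ∧ (twinGraph G).Adj v2 v3 ∧
    (twinGraph G).Adj v3 v4 ∧ (twinGraph G).Adj v4 v0 ∧ (twinGraph G).Adj v0 v2 ∧
    ¬ (twinGraph G).Adj v1 v3 ∧ ¬ (twinGraph G).Adj v1 v4 ∧ ¬ (twinGraph G).Adj v2 v4 ∧
    typeOne G v3 ∧ typeOne G v4 ∧ type1K G v0 ∧ type1K G v1 ∧ type1K G v2

/-- Structure `G_6`: the twin graph is `C_5` with two adjacent chords (cycle
`v0 v1 v2 v3 v4`, chords `v0 v2` and `v0 v3`, so `v0` has degree 4); `v0` is of any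
type, the other vertices of type (1K); no two non-adjacent vertices are both of
type (K), and no two adjacent vertices have the different types (K) and (N). -/
def structG6 (G : SimpleGraph V) : Prop :=
  ∃ v0 v1 v2 v3 v4 : TwinVertex G,
    v0 ≠ v1 ∧ v0 ≠ v2 ∧ v0 ≠ v3 ∧ v0 ≠ v4 ∧ v1 ≠ v2 ∧ v1 ≠ v3 ∧ v1 ≠ v4 ∧
    v2 ≠ v3 ∧ v2 ≠ v4 ∧ v3 ≠ v4 ∧
    (∀ X : TwinVertex G, X = v0 ∨ X = v1 ∨ X = v2 ∨ X = v3 ∨ X = v4) ∧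
    (twinGraph G).Adj v0 v1 ∧ (twinGraph G).Adj v1 v2 ∧ (twinGraph G).Adj v2 v3 ∧
    (twinGraph G).Adj v3 v4 ∧ (twinGraph G).Adj v4 v0 ∧ (twinGraph G).Adj v0 v2 ∧
    (twinGraph G).Adj v0 v3 ∧
    ¬ (twinGraph G).Adj v1 v3 ∧ ¬ (twinGraph G).Adj v1 v4 ∧ ¬ (twinGraph G).Adj v2 v4 ∧
    type1K G v1 ∧ type1K G v2 ∧ type1K G v3 ∧ type1K G v4 ∧
    (∀ X Y : TwinVertex G, X ≠ Y → ¬ (twinGraph G).Adj X Y →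
      ¬ (typeK G X ∧ typeK G Y)) ∧
    (∀ X Y : TwinVertex G, (twinGraph G).Adj X Y → ¬ (typeK G X ∧ typeN G Y))

/-- Structure `G_7`: the twin graph is the kite (`K_4` minus an edge, vertices
`a, b` of degree 3 in the kite and `c, d` the non-adjacent pair) with a pendant
vertex `l` attached to the degree-3 vertex `a`; `l` is of type (1), `a` and `b`
are of type (1K), one of `c, d` is of type (K) and the other of type (1). -/
def structG7 (G : SimpleGraph V) : Prop :=
  ∃ a b c d l : TwinVertex G,
    a ≠ b ∧ a ≠ c ∧ a ≠ d ∧ a ≠ l ∧ b ≠ c ∧ b ≠ d ∧ b ≠ l ∧ c ≠ d ∧ c ≠ l ∧ d ≠ l ∧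
    (∀ X : TwinVertex G, X = a ∨ X = b ∨ X = c ∨ X = d ∨ X = l) ∧
    (twinGraph G).Adj a b ∧ (twinGraph G).Adj a c ∧ (twinGraph G).Adj a d ∧
    (twinGraph G).Adj b c ∧ (twinGraph G).Adj b d ∧ (twinGraph G).Adj a l ∧
    ¬ (twinGraph G).Adj c d ∧ ¬ (twinGraph G).Adj b l ∧ ¬ (twinGraph G).Adj c l ∧
    ¬ (twinGraph G).Adj d l ∧
    typeOne G l ∧ type1K G a ∧ type1K G b ∧ typeK G c ∧ typeOne G d

/-- Structure `G_8`: the twin graph is the kite (`K_4` minus an edge, `a, b` of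
degree 3 and `c, d` the non-adjacent degree-2 pair); one degree-2 vertex `c` is of
type (K) and the other `d` of type (1); one degree-3 vertex `a` is of type (N)
and the other `b` of type (1K). -/
def structG8 (G : SimpleGraph V) : Prop :=
  ∃ a b c d : TwinVertex G,
    a ≠ b ∧ a ≠ c ∧ a ≠ d ∧ b ≠ c ∧ b ≠ d ∧ c ≠ d ∧
    (∀ X : TwinVertex G, X = a ∨ X = b ∨ X = c ∨ X = d) ∧
    (twinGraph G).Adj a b ∧ (twinGraph G).Adj a c ∧ (twinGraph G).Adj a d ∧
    (twinGraph G).Adj b c ∧ (twinGraph G).Adj b d ∧ ¬ (twinGraph G).Adj c d ∧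
    typeN G a ∧ type1K G b ∧ typeK G c ∧ typeOne G d

/-- Structure `G_9`: the twin graph is `C_4`, two adjacent vertices of type (K)
and the other two of type (1). -/
def structG9 (G : SimpleGraph V) : Prop :=
  ∃ v0 v1 v2 v3 : TwinVertex G,
    v0 ≠ v1 ∧ v0 ≠ v2 ∧ v0 ≠ v3 ∧ v1 ≠ v2 ∧ v1 ≠ v3 ∧ v2 ≠ v3 ∧
    (∀ X : TwinVertex G, X = v0 ∨ X = v1 ∨ X = v2 ∨ X = v3) ∧
    (twinGraph G).Adj v0 v1 ∧ (twinGraph G).Adj v1 v2 ∧ (twinGraph G).Adj v2 v3 ∧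
    (twinGraph G).Adj v3 v0 ∧ ¬ (twinGraph G).Adj v0 v2 ∧ ¬ (twinGraph G).Adj v1 v3 ∧
    typeK G v0 ∧ typeK G v1 ∧ typeOne G v2 ∧ typeOne G v3

/-- Structure `G_10`: the twin graph is the wheel `C_4 ∨ K_1` (hub `h`, rim
`v0 v1 v2 v3`); two adjacent rim (degree-3) vertices `v0, v1` are of type (K), the
hub is of type (1K), and the other vertices of type (1). -/
def structG10 (G : SimpleGraph V) : Prop :=
  ∃ h v0 v1 v2 v3 : TwinVertex G,
    h ≠ v0 ∧ h ≠ v1 ∧ h ≠ v2 ∧ h ≠ v3 ∧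
    v0 ≠ v1 ∧ v0 ≠ v2 ∧ v0 ≠ v3 ∧ v1 ≠ v2 ∧ v1 ≠ v3 ∧ v2 ≠ v3 ∧
    (∀ X : TwinVertex G, X = h ∨ X = v0 ∨ X = v1 ∨ X = v2 ∨ X = v3) ∧
    (twinGraph G).Adj h v0 ∧ (twinGraph G).Adj h v1 ∧ (twinGraph G).Adj h v2 ∧
    (twinGraph G).Adj h v3 ∧
    (twinGraph G).Adj v0 v1 ∧ (twinGraph G).Adj v1 v2 ∧ (twinGraph G).Adj v2 v3 ∧
    (twinGraph G).Adj v3 v0 ∧ ¬ (twinGraph G).Adj v0 v2 ∧ ¬ (twinGraph G).Adj v1 v3 ∧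
    typeK G v0 ∧ typeK G v1 ∧ type1K G h ∧ typeOne G v2 ∧ typeOne G v3

/-!
Since `Γ_2(v)` is not homogeneous it contains `e, f, g` with `e ~ f` and `f ≁ g`. Every
neighbour `x` of `v` is adjacent to `f`: otherwise, for a common neighbour `m` of `f` and `v`,
the vertices `x, m, e, g` have the distinct distance vectors `(1,2), (1,1), (2,1), (2,2)` to
`(v, f)`, so the remaining `n - 4` vertices resolve `G`, contradicting `β(G) = n - 3`.
Hence `Γ_1(v) = R_1(v)`. Moreover `f` is not a twin of `v` (as `e ~ f` but `e ≁ v`), so the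
class of `f` lies in `Γ_2^*(v^*)` and is adjacent to every class in `Γ_1^*(v^*)`.
-/

variable {G : SimpleGraph V}

lemma dist_eq_two_iff {a c : V} :
    G.dist a c = 2 ↔ a ≠ c ∧ ¬ G.Adj a c ∧ (G.commonNeighbors a c).Nonempty := by
  rw [SimpleGraph.dist, ENat.toNat_eq_iff two_ne_zero]
  exact edist_eq_two_iff

lemma dist_eq_two_of_not_adj {a c : V} (hconn : G.Connected) (hle : ∀ u w, G.dist u w ≤ 2)
    (hne : a ≠ c) (hnadj : ¬ G.Adj a c) : G.dist a c = 2 := by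
  have hpos := hconn.pos_dist_of_ne hne
  have hone : G.dist a c ≠ 1 := mt dist_eq_one_iff_adj.mp hnadj
  have := hle a c
  omega

lemma metricDim_le_ncard {W : Set V} (hW : Resolves G W) : metricDim G ≤ W.ncard :=
  Nat.sInf_le ⟨W, hW, rfl⟩

lemma resolves_of_separates_compl (hconn : G.Connected) {W : Set V}
    (hW : ∀ u ∉ W, ∀ u' ∉ W, u ≠ u' → ∃ w ∈ W, G.dist u w ≠ G.dist u' w) :
    Resolves G W := by
  intro u u' hne
  by_cases hu : u ∈ W
  · exact ⟨u, hu, by simpa using (hconn.pos_dist_of_ne hne.symm).ne⟩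
  by_cases hu' : u' ∈ W
  · exact ⟨u', hu', by simpa using (hconn.pos_dist_of_ne hne).ne'⟩
  exact hW u hu u' hu' hne

lemma metricDim_add_le_card [Fintype V] (hconn : G.Connected) {k : ℕ} (p : Fin k → V)
    (a b : V) (hp : Function.Injective fun i => (G.dist (p i) a, G.dist (p i) b))
    (ha : ∀ i, p i ≠ a) (hb : ∀ i, p i ≠ b) :
    metricDim G + k ≤ Fintype.card V := by
  classical
  have hinj : Function.Injective p := fun i j h => hp (by simp only [h])
  set W : Finset V := (Finset.univ.image p)ᶜ
  have hW : Resolves G (W : Set V) := by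
    refine resolves_of_separates_compl hconn fun u hu u' hu' hne => ?_
    obtain ⟨i, rfl⟩ : ∃ i, p i = u := by simpa [W] using hu
    obtain ⟨j, rfl⟩ : ∃ j, p j = u' := by simpa [W] using hu'
    have hprof : (G.dist (p i) a, G.dist (p i) b) ≠ (G.dist (p j) a, G.dist (p j) b) :=
      fun h => hne (congrArg p (hp h))
    by_cases hab : G.dist (p i) a = G.dist (p j) a
    · exact ⟨b, by simpa [W] using hb, fun h => hprof (Prod.ext hab h)⟩
    · exact ⟨a, by simpa [W] using ha, hab⟩
  have hcard : W.card + k = Fintype.card V := by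
    rw [Finset.card_compl, Finset.card_image_of_injective _ hinj, Finset.card_univ,
      Fintype.card_fin, Nat.sub_add_cancel (by simpa using Fintype.card_le_of_injective p hinj)]
  have := metricDim_le_ncard hW
  rw [Set.ncard_coe_finset] at this
  omega

lemma twinRel.adj_of_adj {u u' z : V} (h : twinRel G u u') (hadj : G.Adj u' z) (hz : z ≠ u) :
    G.Adj u z := by
  rcases h with rfl | ⟨-, hN⟩
  · exact hadj
  · have hz' : z ∈ G.neighborSet u' \ {u} := ⟨hadj, hz⟩
    rw [← hN] at hz'
    exact hz'.1

lemma twinRel_symm {u w : V} (h : twinRel G u w) : twinRel G w u := by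
  rcases h with rfl | ⟨hne, hN⟩
  · exact Or.inl rfl
  · exact Or.inr ⟨hne.symm, hN.symm⟩

lemma adj_of_twinRel_of_twinRel {u w t z : V} (huw : twinRel G u w) (hwt : twinRel G w t)
    (hut : u ≠ t) (hz : G.Adj u z) (hzt : z ≠ t) : G.Adj t z := by
  obtain rfl | hzw := eq_or_ne z w
  · have htu : G.Adj t u := (twinRel_symm hwt).adj_of_adj hz.symm hut
    exact ((twinRel_symm huw).adj_of_adj htu.symm hzt.symm).symm
  · exact (twinRel_symm hwt).adj_of_adj ((twinRel_symm huw).adj_of_adj hz hzw) hzt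

lemma twinRel_trans {u w t : V} (huw : twinRel G u w) (hwt : twinRel G w t) :
    twinRel G u t := by
  refine (eq_or_ne u t).imp id fun hut => ⟨hut, Set.ext fun z => ?_⟩
  simp only [Set.mem_sdiff, mem_neighborSet, Set.mem_singleton_iff]
  exact ⟨fun ⟨hz, hzt⟩ => ⟨adj_of_twinRel_of_twinRel huw hwt hut hz hzt, hz.ne'⟩,
    fun ⟨hz, hzu⟩ => ⟨adj_of_twinRel_of_twinRel (twinRel_symm hwt) (twinRel_symm huw)
      hut.symm hz hzu, hz.ne'⟩⟩

lemma cls_eq_iff {u w : V} : cls G u = cls G w ↔ twinRel G u w := by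
  refine ⟨fun h => ?_, fun h => Subtype.ext <| Set.ext fun z =>
    ⟨twinRel_trans (twinRel_symm h), twinRel_trans h⟩⟩
  have hw : w ∈ (cls G w).1 := Or.inl rfl
  rwa [← h] at hw

lemma exists_eq_cls (A : TwinVertex G) : ∃ u, A = cls G u :=
  let ⟨u, hu⟩ := A.2
  ⟨u, Subtype.ext hu⟩

lemma twinGraph_adj_cls_iff {u w : V} :
    (twinGraph G).Adj (cls G u) (cls G w) ↔ ¬ twinRel G u w ∧ G.Adj u w := by
  refine ⟨fun ⟨hne, u', hu', w', hw', hadj⟩ => ?_, fun ⟨hnt, hadj⟩ =>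
    ⟨mt cls_eq_iff.mp hnt, u, Or.inl rfl, w, Or.inl rfl, hadj⟩⟩
  have hnt : ¬ twinRel G u w := mt cls_eq_iff.mpr hne
  have hw'u : w' ≠ u := by rintro rfl; exact hnt (twinRel_symm hw')
  have huw' : G.Adj u w' := (hu' : twinRel G u u').adj_of_adj hadj hw'u
  exact ⟨hnt, ((hw' : twinRel G w w').adj_of_adj huw'.symm
    fun h => hnt (h ▸ Or.inl rfl)).symm⟩

lemma exists_adj_not_adj_of_not_homogeneous {S : Set V} (h : ¬ Homogeneous G S) :
    ∃ e ∈ S, ∃ f ∈ S, ∃ g ∈ S, G.Adj e f ∧ f ≠ g ∧ ¬ G.Adj f g := by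
  simp only [Homogeneous, not_or] at h
  push Not at h
  obtain ⟨⟨c, hc, d, hd, hcd, hncd⟩, b, hb, b', hb', hbb'⟩ := h
  by_cases hb'c : G.Adj b' c
  · exact ⟨b', hb', c, hc, d, hd, hb'c, hcd, hncd⟩
  by_cases heq : b' = c
  · subst heq
    exact ⟨b, hb, b', hb', d, hd, hbb', hcd, hncd⟩
  · exact ⟨b, hb, b', hb', c, hc, hbb', heq, hb'c⟩

lemma adj_of_mem_gamma_one [Fintype V] (hdiam : diamEq G 2)
    (hbeta : metricDim G = Fintype.card V - 3) {v x e f g : V} (hx : x ∈ Gamma G 1 v)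
    (he : e ∈ Gamma G 2 v) (hf : f ∈ Gamma G 2 v) (hg : g ∈ Gamma G 2 v)
    (hef : G.Adj e f) (hfg : f ≠ g) (hnfg : ¬ G.Adj f g) : G.Adj x f := by
  obtain ⟨hconn, hle, -⟩ := hdiam
  simp only [Gamma, Set.mem_ofPred_eq] at hx he hf hg
  by_contra hxf
  obtain ⟨m, hmf, hmv⟩ := (dist_eq_two_iff.mp hf).2.2
  have hxf2 : G.dist x f = 2 :=
    dist_eq_two_of_not_adj hconn hle (by rintro rfl; omega) hxf
  have hgf2 : G.dist g f = 2 :=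
    dist_eq_two_of_not_adj hconn hle hfg.symm fun h => hnfg h.symm
  have hmv1 : G.dist m v = 1 := dist_eq_one_iff_adj.mpr hmv.symm
  have hmf1 : G.dist m f = 1 := dist_eq_one_iff_adj.mpr hmf.symm
  have hef1 : G.dist e f = 1 := dist_eq_one_iff_adj.mpr hef
  have hprofile : (fun i => (G.dist (![x, m, e, g] i) v, G.dist (![x, m, e, g] i) f)) =
      ![(1, 2), (1, 1), (2, 1), (2, 2)] := by
    funext i
    fin_cases i <;> simp [hx, hxf2, hmv1, hmf1, he, hef1, hg, hgf2]
  have := metricDim_add_le_card hconn ![x, m, e, g] v f (by rw [hprofile]; decide)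
    (fun i h => by have := congrFun hprofile i; fin_cases i <;> simp_all)
    (fun i h => by have := congrFun hprofile i; fin_cases i <;> simp_all)
  omega

theorem R2_empty_of_gamma_two_not_homogeneous_general
    {V : Type*} [Fintype V] (G : SimpleGraph V)
    (hdiam : diamEq G 2)
    (hbeta : metricDim G = Fintype.card V - 3)
    (v : V)
    (hnhom : ¬ Homogeneous G (Gamma G 2 v)) :
    R2 G v = ∅ ∧ R2Star G v = ∅ := by
  obtain ⟨e, he, f, hf, g, hg, hef, hfg, hnfg⟩ := exists_adj_not_adj_of_not_homogeneous hnhom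
  have hadj_f : ∀ x ∈ Gamma G 1 v, G.Adj x f := fun x hx =>
    adj_of_mem_gamma_one hdiam hbeta hx he hf hg hef hfg hnfg
  obtain ⟨hev, hnev, -⟩ := dist_eq_two_iff.mp he
  obtain ⟨hfv, hnfv, -⟩ := dist_eq_two_iff.mp hf
  refine ⟨Set.eq_empty_of_forall_notMem fun x hx => hx.2 ⟨hx.1, f, hf, hadj_f x hx.1⟩,
    Set.eq_empty_of_forall_notMem fun A hA => hA.2 ⟨hA.1, cls G f, ?_⟩⟩
  obtain ⟨u, rfl⟩ := exists_eq_cls A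
  have huv : (twinGraph G).Adj (cls G u) (cls G v) := dist_eq_one_iff_adj.mp hA.1
  have hu : G.Adj u v := (twinGraph_adj_cls_iff.mp huv).2
  have huf : (twinGraph G).Adj (cls G u) (cls G f) := twinGraph_adj_cls_iff.mpr
    ⟨fun h => hnfv ((twinRel_symm h).adj_of_adj hu hfv.symm), hadj_f u (dist_eq_one_iff_adj.mpr hu)⟩
  have hfv' : cls G f ≠ cls G v := fun h =>
    hnev ((twinRel_symm (cls_eq_iff.mp h)).adj_of_adj hef.symm hev).symm
  have hnfv' : ¬ (twinGraph G).Adj (cls G f) (cls G v) := fun h =>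
    hnfv (twinGraph_adj_cls_iff.mp h).2
  exact ⟨dist_eq_two_iff.mpr ⟨hfv', hnfv', cls G u, huf.symm, huv.symm⟩, huf⟩

/-- If `G` is connected of order `n`, `diam(G) = 2`, `β(G) = n - 3`, `v` is a
vertex with `Γ_2^*(v^*) ≠ ∅` and `Γ_1(v)` homogeneous, and `Γ_2(v)` is not
homogeneous, then `R_2(v) = ∅` and `R_2^*(v^*) = ∅`. -/
theorem R2_empty_of_gamma_two_not_homogeneous
    {V : Type*} [Fintype V] (G : SimpleGraph V)
    (hdiam : diamEq G 2)
    (hbeta : metricDim G = Fintype.card V - 3)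
    (v : V) (h2 : (GammaStar G 2 v).Nonempty)
    (hhom : Homogeneous G (Gamma G 1 v))
    (hnhom : ¬ Homogeneous G (Gamma G 2 v)) :
    R2 G v = ∅ ∧ R2Star G v = ∅ :=
  R2_empty_of_gamma_two_not_homogeneous_general G hdiam hbeta v hnhom

end PaperMetricDim
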